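/- Lower bound for widths of the set V_k in ℓ_2^m: for 1 ≤ k ≤ m and 0 ≤ n ≤ m, d_n(V_k, ℓ_2^m) ≥ k^{1/2}(1 - n/m)^{1/2}. -/

import Mathlib

open scoped ENNReal BigOperators Pointwise

/-- The `l_p` norm on `ℝ^m`, for `p ∈ [1, ∞]` (`p = ∞` gives the max norm). -/
noncomputable def pNorm {m : ℕ} (p : ℝ≥0∞) (x : Fin m → ℝ) : ℝ :=
  if p = ∞ then ⨆ i, |x i| else (∑ i, |x i| ^ p.toReal) ^ (1 / p.toReal)

/-- The closed unit ball of `l_p^m`. -/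
noncomputable def pBall (m : ℕ) (p : ℝ≥0∞) : Set (Fin m → ℝ) :=
  {x | pNorm p x ≤ 1}

/-- The Kolmogorov `n`-width of `M ⊆ ℝ^m` in `l_q^m`. -/
noncomputable def kolWidth {m : ℕ} (q : ℝ≥0∞) (n : ℕ) (M : Set (Fin m → ℝ)) : ℝ :=
  ⨅ L : {L : Submodule ℝ (Fin m → ℝ) // Module.finrank ℝ L ≤ n},
    ⨆ x : M, ⨅ y : (L : Submodule ℝ (Fin m → ℝ)), pNorm q ((x : Fin m → ℝ) - (y : Fin m → ℝ))

/-- `V_k`: the convex hull of all vectors in `ℝ^m` with exactly `k` coordinates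
equal to `±1` and the remaining coordinates `0`. -/
noncomputable def Vk (m k : ℕ) : Set (Fin m → ℝ) :=
  convexHull ℝ {v : Fin m → ℝ | (∀ i, v i = 1 ∨ v i = -1 ∨ v i = 0) ∧
    {i | v i ≠ 0}.ncard = k}

/-!
Let `L` be a subspace of dimension at most `n` and `P` the orthogonal projection onto it. Since
`∑ i, ‖P eᵢ‖² = dim L ≤ n`, some `k` coordinates `S` satisfy `∑ i ∈ S, ‖P eᵢ‖² ≤ k n / m`
(the `k` smallest terms are at most the average). Choosing signs one at a time so that each new
term makes a non-positive inner product with the partial sum gives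
`‖P (∑ i ∈ S, εᵢ eᵢ)‖² ≤ ∑ i ∈ S, ‖P eᵢ‖²`. The vertex `u = ∑ i ∈ S, εᵢ eᵢ` of `V_k` has
`‖u‖² = k`, so by Pythagoras its distance to `L` is at least `(k - k n / m)^{1/2}`.
-/

open Finset Module

theorem Finset.exists_subset_card_eq_mul_sum_le {ι : Type*} [DecidableEq ι] (a : ι → ℝ)
    (s : Finset ι) {k : ℕ} (hk : k ≤ #s) :
    ∃ S ⊆ s, #S = k ∧ #s * ∑ i ∈ S, a i ≤ k * ∑ i ∈ s, a i := by
  induction s using Finset.induction_on_max_value a generalizing k with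
  | empty => exact ⟨∅, subset_refl _, by simpa [eq_comm] using hk, by simp⟩
  | insert j s hj hmax ih =>
    rw [card_insert_of_notMem hj] at hk ⊢
    rcases hk.eq_or_lt with rfl | hlt
    · exact ⟨insert j s, subset_refl _, card_insert_of_notMem hj, le_rfl⟩
    obtain ⟨S, hSs, hS, hsum⟩ := ih (Nat.lt_succ_iff.mp hlt)
    have hSj : ∑ i ∈ S, a i ≤ k * a j := by
      calc ∑ i ∈ S, a i ≤ ∑ _i ∈ S, a j := sum_le_sum fun i hi => hmax i (hSs hi)
        _ = k * a j := by simp [hS]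
    refine ⟨S, hSs.trans (subset_insert _ _), hS, ?_⟩
    rw [sum_insert hj]
    push_cast
    linarith

theorem Submodule.norm_sq_sub_norm_sq_starProjection_le {𝕜 E : Type*} [RCLike 𝕜]
    [NormedAddCommGroup E] [InnerProductSpace 𝕜 E] (K : Submodule 𝕜 E)
    [K.HasOrthogonalProjection] (x : E) {y : E} (hy : y ∈ K) :
    ‖x‖ ^ 2 - ‖K.starProjection x‖ ^ 2 ≤ ‖x - y‖ ^ 2 := by
  have hpyth := K.norm_sq_eq_add_norm_sq_starProjection x
  rw [starProjection_orthogonal_val] at hpyth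
  have hmin : ‖x - K.starProjection x‖ ≤ ‖x - y‖ := by
    rw [starProjection_minimal]
    exact ciInf_le ⟨0, Set.forall_mem_range.2 fun _ => norm_nonneg _⟩ (⟨y, hy⟩ : K)
  nlinarith [norm_nonneg (x - K.starProjection x)]

section InnerProductSpace

variable {ι E : Type*} [NormedAddCommGroup E] [InnerProductSpace ℝ E]

theorem exists_signs_norm_sum_sq_le (w : ι → E) (s : Finset ι) :
    ∃ ε : ι → ℝ, (∀ i, ε i = 1 ∨ ε i = -1) ∧ ‖∑ i ∈ s, ε i • w i‖ ^ 2 ≤ ∑ i ∈ s, ‖w i‖ ^ 2 := by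
  classical
  induction s using Finset.induction_on with
  | empty => exact ⟨fun _ => 1, fun _ => Or.inl rfl, by simp⟩
  | insert j s hj ih =>
    obtain ⟨ε, hε, hle⟩ := ih
    set u := ∑ i ∈ s, ε i • w i
    obtain ⟨c, hc, hcu⟩ : ∃ c : ℝ, (c = 1 ∨ c = -1) ∧ c * inner ℝ (w j) u ≤ 0 := by
      by_cases h : inner ℝ (w j) u ≤ 0
      · exact ⟨1, Or.inl rfl, by simpa using h⟩
      · exact ⟨-1, Or.inr rfl, by linarith⟩
    have hrest : ∑ i ∈ s, Function.update ε j c i • w i = u :=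
      sum_congr rfl fun i hi => by rw [Function.update_of_ne (ne_of_mem_of_not_mem hi hj)]
    refine ⟨Function.update ε j c, fun i => ?_, ?_⟩
    · rcases eq_or_ne i j with rfl | h
      · simpa using hc
      · simpa [Function.update_of_ne h] using hε i
    have hc2 : c ^ 2 = 1 := by rcases hc with rfl | rfl <;> norm_num
    rw [sum_insert hj, sum_insert hj, Function.update_self, hrest, norm_add_sq_real,
      norm_smul, mul_pow, Real.norm_eq_abs, sq_abs, hc2, real_inner_smul_left]
    linarith

variable [Fintype ι] [FiniteDimensional ℝ E]

theorem OrthonormalBasis.sum_norm_sq_starProjection (b : OrthonormalBasis ι ℝ E)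
    (K : Submodule ℝ E) : ∑ i, ‖K.starProjection (b i)‖ ^ 2 = finrank ℝ K := by
  set f := stdOrthonormalBasis ℝ K
  calc ∑ i, ‖K.starProjection (b i)‖ ^ 2
      = ∑ i, ∑ j, inner ℝ (b i) (f j : E) ^ 2 := by
        refine sum_congr rfl fun i _ => ?_
        change ‖K.orthogonalProjectionOnto (b i)‖ ^ 2 = _
        rw [← f.sum_sq_inner_left]
        simp only [Submodule.inner_orthogonalProjectionOnto_eq_of_mem_right]
    _ = ∑ j, ‖(f j : E)‖ ^ 2 := by
        rw [sum_comm]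
        exact sum_congr rfl fun j _ => b.sum_sq_inner_right _
    _ = finrank ℝ K := by simp [show ∀ j, ‖(f j : E)‖ = 1 from f.orthonormal.1]

theorem OrthonormalBasis.exists_signed_sum_far_from_submodule (b : OrthonormalBasis ι ℝ E)
    (K : Submodule ℝ E) {k : ℕ} (hk : k ≤ Fintype.card ι) :
    ∃ S : Finset ι, #S = k ∧ ∃ ε : ι → ℝ, (∀ i, ε i = 1 ∨ ε i = -1) ∧
      ∀ y ∈ K, k * (1 - finrank ℝ K / Fintype.card ι) ≤ ‖∑ i ∈ S, ε i • b i - y‖ ^ 2 := by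
  classical
  set w := fun i => K.starProjection (b i)
  obtain ⟨S, -, hS, hSsum⟩ := exists_subset_card_eq_mul_sum_le (fun i => ‖w i‖ ^ 2) univ hk
  obtain ⟨ε, hε, hεsum⟩ := exists_signs_norm_sum_sq_le w S
  refine ⟨S, hS, ε, hε, fun y hy => ?_⟩
  set u := ∑ i ∈ S, ε i • b i
  have hu : ‖u‖ ^ 2 = k := by
    have hε2 : ∀ i, ε i * ε i = 1 := fun i => by rcases hε i with h | h <;> simp [h]
    rw [← real_inner_self_eq_norm_sq, b.orthonormal.inner_sum]
    simp [hε2, hS]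
  have hPu : K.starProjection u = ∑ i ∈ S, ε i • w i := by simp [u, w, map_sum]
  have hPu_le : ‖K.starProjection u‖ ^ 2 ≤ k * finrank ℝ K / Fintype.card ι := by
    rw [hPu]
    refine hεsum.trans ?_
    rcases (Fintype.card ι).eq_zero_or_pos with hι | hι
    · have : S = ∅ := by simpa [hι] using hS.trans (Nat.le_zero.mp (hι ▸ hk))
      simp [this, hι]
    rw [card_univ, b.sum_norm_sq_starProjection K] at hSsum
    rw [le_div_iff₀ (by exact_mod_cast hι), mul_comm]
    exact hSsum
  have := K.norm_sq_sub_norm_sq_starProjection_le u hy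
  rw [mul_one_sub, ← mul_div_assoc]
  linarith

end InnerProductSpace

theorem pNorm_nonneg {m : ℕ} (p : ℝ≥0∞) (x : Fin m → ℝ) : 0 ≤ pNorm p x := by
  unfold pNorm
  split_ifs
  · exact Real.iSup_nonneg fun i => abs_nonneg (x i)
  · exact Real.rpow_nonneg (sum_nonneg fun i _ => by positivity) _

theorem pNorm_two_eq_norm_toLp {m : ℕ} (x : Fin m → ℝ) :
    pNorm 2 x = ‖WithLp.toLp 2 x‖ := by
  rw [pNorm, if_neg ENNReal.ofNat_ne_top, EuclideanSpace.norm_eq, Real.sqrt_eq_rpow]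
  norm_num

theorem le_kolWidth {m n : ℕ} {q : ℝ≥0∞} {M : Set (Fin m → ℝ)} {c : ℝ}
    (hM : BddAbove (pNorm q '' M))
    (h : ∀ L : Submodule ℝ (Fin m → ℝ), finrank ℝ L ≤ n →
      ∃ x ∈ M, ∀ y ∈ L, c ≤ pNorm q (x - y)) :
    c ≤ kolWidth q n M := by
  have : Nonempty {L : Submodule ℝ (Fin m → ℝ) // finrank ℝ L ≤ n} := ⟨⟨⊥, by simp⟩⟩
  refine le_ciInf fun ⟨L, hL⟩ => ?_
  obtain ⟨x, hx, hfar⟩ := h L hL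
  obtain ⟨R, hR⟩ := hM
  have hdist_bdd : ∀ z : Fin m → ℝ,
      BddBelow (Set.range fun y : L => pNorm q (z - (y : Fin m → ℝ))) :=
    fun _ => ⟨0, Set.forall_mem_range.2 fun _ => pNorm_nonneg _ _⟩
  have hbdd : BddAbove
      (Set.range fun z : M => ⨅ y : L, pNorm q ((z : Fin m → ℝ) - (y : Fin m → ℝ))) := by
    refine ⟨R, Set.forall_mem_range.2 fun z => ?_⟩
    refine (ciInf_le (hdist_bdd z) 0).trans ?_
    simpa using hR ⟨z, z.2, rfl⟩
  exact le_ciSup_of_le hbdd ⟨x, hx⟩ (le_ciInf fun y => hfar y y.2)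

theorem le_kolWidth_two {m n : ℕ} {M : Set (Fin m → ℝ)} {c : ℝ}
    (hM : BddAbove (pNorm 2 '' M))
    (h : ∀ K : Submodule ℝ (EuclideanSpace ℝ (Fin m)), finrank ℝ K ≤ n →
      ∃ x ∈ M, ∀ y ∈ K, c ≤ ‖WithLp.toLp 2 x - y‖) :
    c ≤ kolWidth 2 n M := by
  refine le_kolWidth hM fun L hL => ?_
  set e := (WithLp.linearEquiv 2 ℝ (Fin m → ℝ)).symm
  obtain ⟨x, hx, hfar⟩ := h (L.map e.toLinearMap) ((e.finrank_map_eq L).trans_le hL)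
  refine ⟨x, hx, fun y hy => ?_⟩
  rw [pNorm_two_eq_norm_toLp]
  exact hfar _ (Submodule.mem_map_of_mem hy)

theorem sum_smul_single_mem_Vk {m : ℕ} (S : Finset (Fin m)) {ε : Fin m → ℝ}
    (hε : ∀ i, ε i = 1 ∨ ε i = -1) : (∑ i ∈ S, ε i • Pi.single i 1 : Fin m → ℝ) ∈ Vk m #S := by
  have hcoord : ∀ j, (∑ i ∈ S, ε i • Pi.single i 1 : Fin m → ℝ) j = if j ∈ S then ε j else 0 := by
    intro j
    simp [Finset.sum_apply, Pi.single_apply]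
  refine subset_convexHull ℝ _ ⟨fun j => ?_, ?_⟩
  · rw [hcoord]
    split_ifs
    · rcases hε j with h | h <;> simp [h]
    · simp
  · convert Set.ncard_coe_finset S
    ext j
    have : ε j ≠ 0 := by rcases hε j with h | h <;> simp [h]
    by_cases hj : j ∈ S <;> simp [hcoord, hj, this]

theorem pNorm_two_le_of_mem_Vk {m k : ℕ} {x : Fin m → ℝ} (hx : x ∈ Vk m k) :
    pNorm 2 x ≤ √k := by
  have hball : {x : Fin m → ℝ | pNorm 2 x ≤ √k} =
      (WithLp.linearEquiv 2 ℝ (Fin m → ℝ)).symm ⁻¹' Metric.closedBall 0 √k := by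
    ext x
    simp [pNorm_two_eq_norm_toLp]
  have hconv : Convex ℝ {x : Fin m → ℝ | pNorm 2 x ≤ √k} := by
    rw [hball]
    exact (convex_closedBall _ _).linear_preimage _
  refine convexHull_min ?_ hconv hx
  rintro v ⟨hv, hcard⟩
  have hsq : ∀ i, ‖v i‖ ^ 2 = if v i ≠ 0 then 1 else 0 := fun i => by
    rcases hv i with h | h | h <;> simp [h]
  have hsum : ∑ i, ‖v i‖ ^ 2 = k := by
    rw [sum_congr rfl fun i _ => hsq i, sum_boole, ← hcard, ← Set.ncard_coe_finset]
    congr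
    ext i
    simp
  rw [Set.mem_ofPred_eq, pNorm_two_eq_norm_toLp, EuclideanSpace.norm_eq]
  exact Real.sqrt_le_sqrt hsum.le

theorem stmt11_general (m k n : ℕ) (hkm : k ≤ m) :
    (k : ℝ) ^ ((1 : ℝ) / 2) * (1 - (n : ℝ) / m) ^ ((1 : ℝ) / 2) ≤
      kolWidth 2 n (Vk m k) := by
  rw [← Real.sqrt_eq_rpow, ← Real.sqrt_eq_rpow, ← Real.sqrt_mul (Nat.cast_nonneg k)]
  refine le_kolWidth_two ⟨√k, ?_⟩ fun K hK => ?_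
  · rintro _ ⟨x, hx, rfl⟩
    exact pNorm_two_le_of_mem_Vk hx
  obtain ⟨S, rfl, ε, hε, hfar⟩ :=
    (EuclideanSpace.basisFun (Fin m) ℝ).exists_signed_sum_far_from_submodule K (by simpa using hkm)
  refine ⟨_, sum_smul_single_mem_Vk S hε, fun y hy => ?_⟩
  have hvec : WithLp.toLp 2 (∑ i ∈ S, ε i • Pi.single i 1 : Fin m → ℝ) =
      ∑ i ∈ S, ε i • EuclideanSpace.basisFun (Fin m) ℝ i := by
    ext j
    simp
  rw [hvec, Real.sqrt_le_left (norm_nonneg _)]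
  refine le_trans ?_ (hfar y hy)
  rw [Fintype.card_fin]
  gcongr

theorem stmt11 (m k n : ℕ) (hk1 : 1 ≤ k) (hkm : k ≤ m) (hn : n ≤ m) :
    (k : ℝ) ^ ((1 : ℝ) / 2) * (1 - (n : ℝ) / m) ^ ((1 : ℝ) / 2) ≤
      kolWidth 2 n (Vk m k) :=
  stmt11_general m k n hkm
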